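/- arXiv:1610.07131 — 2 statements merged into one kernel-verified Lean document; each statement's English description precedes it below -/
import Mathlib

section
/- If h ∈ Ṽ₁, i.e. h ∈ ℍ₁ satisfies ⟨h,f⟩ ≤ 0 for every f ∈ V₁, then h(t) ≤ 0 for every t ∈ [0,∞). -/
open MeasureTheory Set Filter
open scoped ENNReal NNReal InnerProductSpace

noncomputable section

/-- Lebesgue measure on `(0, ∞)`. -/
def muPos : Measure ℝ := volume.restrict (Set.Ioi (0:ℝ))

/-- `L²([0,∞))`, the space of derivatives.  It is isometric to the Cameron–Martin
space `ℍ₁` of the Wiener process via `h ↦ h'`, `h(t) = ∫₀ᵗ h'(s) ds`; we identify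
`ℍ₁` with this Hilbert space. -/
abbrev E : Type := Lp ℝ 2 muPos

/-- The Cameron–Martin function with derivative `φ`:  `t ↦ ∫₀ᵗ φ(s) ds`. -/
def primitive (φ : E) (t : ℝ) : ℝ := ∫ s in Set.Ioc (0:ℝ) t, φ s

/-- `V₁`: elements of `ℍ₁` whose derivative admits a non-increasing version on `[0,∞)`. -/
def V1 : Set E := {φ | ∃ ψ : ℝ → ℝ, AntitoneOn ψ (Set.Ici 0) ∧ (⇑φ) =ᵐ[muPos] ψ}

/-- The polar cone of a set in a real inner product space. -/
def polar {H : Type*} [NormedAddCommGroup H] [InnerProductSpace ℝ H] (A : Set H) : Set H :=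
  {x | ∀ y ∈ A, ⟪x, y⟫_ℝ ≤ 0}

/-- `p` is the metric projection of `x` on `A` (the nearest point of `A` to `x`). -/
def IsProj {H : Type*} [NormedAddCommGroup H] (A : Set H) (x p : H) : Prop :=
  p ∈ A ∧ ∀ y ∈ A, ‖x - p‖ ≤ ‖x - y‖

/-- `ℍ_d` as a Hilbert space: `d`-tuples of elements of `ℍ₁` (identified with their
derivatives), with inner product `⟪h,g⟫ = ∑ i, ⟪hᵢ, gᵢ⟫`. -/
abbrev HD (d : ℕ) : Type := PiLp 2 (fun _ : Fin d => E)

/-- The additive function `t ↦ ∑ i, ∫₀^{tᵢ} φᵢ(s) ds` of `ℍ_d` associated with `Φ`. -/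
def addPrim {d : ℕ} (Φ : HD d) (t : Fin d → ℝ) : ℝ := ∑ i, primitive (Φ i) (t i)

/-- `V₂ = {h = h₁ + ⋯ + h_d ∈ ℍ_d : hᵢ ∈ V₁ for all i}`. -/
def V2 {d : ℕ} : Set (HD d) := {Φ | ∀ i, Φ i ∈ V1}

/-! In `L²(0,∞)` the indicator of `Iic t` is `1_{(0,t]}`, the derivative of `s ↦ min s t`. It is
non-increasing, so it lies in `V₁`, and its inner product with `φ` is `∫₀ᵗ φ = h(t)`; polarity
makes this non-positive. -/

theorem antitone_indicator_Iic_const {α β : Type*} [Preorder α] [Preorder β] [Zero β]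
    (t : α) {c : β} (hc : 0 ≤ c) : Antitone ((Iic t).indicator fun _ => c) := by
  intro a b hab
  by_cases hb : b ≤ t
  · simp [indicator_of_mem (show a ∈ Iic t from hab.trans hb), indicator_of_mem (mem_Iic.2 hb)]
  · rw [indicator_of_notMem (mt mem_Iic.1 hb)]
    exact indicator_nonneg (fun _ _ => hc) a

theorem muPos_restrict_Iic (t : ℝ) : muPos.restrict (Iic t) = volume.restrict (Ioc 0 t) := by
  rw [muPos, Measure.restrict_restrict measurableSet_Iic, inter_comm, Ioi_inter_Iic]

theorem muPos_Iic_ne_top (t : ℝ) : muPos (Iic t) ≠ ∞ := by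
  rw [← Measure.restrict_apply_univ, muPos_restrict_Iic]
  simp

def indicatorIic (t : ℝ) : E := indicatorConstLp 2 measurableSet_Iic (muPos_Iic_ne_top t) 1

theorem indicatorIic_mem_V1 (t : ℝ) : indicatorIic t ∈ V1 :=
  ⟨_, (antitone_indicator_Iic_const t zero_le_one).antitoneOn _, indicatorConstLp_coeFn⟩

theorem inner_indicatorIic (φ : E) (t : ℝ) : ⟪φ, indicatorIic t⟫_ℝ = primitive φ t := by
  rw [real_inner_comm, indicatorIic, L2.inner_indicatorConstLp_one, muPos_restrict_Iic,
    primitive]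

/-- if `h ∈ Ṽ₁`, i.e. `⟪h, f⟫ ≤ 0` for every `f ∈ V₁`, then
`h(t) ≤ 0` for every `t ∈ [0,∞)`. -/
theorem polarV1_mem_nonpos (φ : E) (hφ : φ ∈ polar V1) :
    ∀ t : ℝ, 0 ≤ t → primitive φ t ≤ 0 := fun t _ =>
  inner_indicatorIic φ t ▸ hφ _ (indicatorIic_mem_V1 t)
end
end

section
/- For every h ∈ ℍ₁, the projection h̲ = Pr_{V₁} h is the unique solution of the minimization problem min{‖g‖ : g ∈ ℍ₁, g(t) ≥ h(t) for all t ∈ [0,∞)}; that is, h̲ ∈ ℍ₁ satisfies h̲ ≥ h pointwise, ‖h̲‖ ≤ ‖g‖ for every g ∈ ℍ₁ with g ≥ h pointwise, and any such g with ‖g‖ = ‖h̲‖ equals h̲. -/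
/-!
Projecting onto the closed convex cone `V₁` leaves a residual `φ - p` in the polar cone of `V₁`
that is orthogonal to `p`; testing it against the indicators `1_{(0,t]} ∈ V₁` shows that `p`
majorizes `φ`. If `g` is any majorant, then `g - φ` has non-negative primitive while `p` is
non-negative and non-increasing, which forces `⟪g - φ, p⟫ ≥ 0`. Hence `⟪g, p⟫ ≥ ⟪φ, p⟫ = ‖p‖²`:
all majorants lie in the half-space `{g | ⟪g, p⟫ ≥ ‖p‖²}`, whose unique point of least norm is `p`.
-/

open MeasureTheory Set Filter
open scoped ENNReal NNReal InnerProductSpace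

noncomputable section

section ConeProjection

variable {H : Type*} [NormedAddCommGroup H] [InnerProductSpace ℝ H]

theorem IsProj.inner_sub_le_zero {K : Set H} (hK : Convex ℝ K) {x p : H} (hp : IsProj K x p) :
    ∀ y ∈ K, ⟪x - p, y - p⟫_ℝ ≤ 0 := by
  have : Nonempty K := ⟨⟨p, hp.1⟩⟩
  refine (norm_eq_iInf_iff_real_inner_le_zero hK hp.1).1 (le_antisymm ?_ ?_)
  · exact le_ciInf fun w => hp.2 w w.2
  · exact ciInf_le ⟨0, by rintro _ ⟨w, rfl⟩; exact norm_nonneg (x - w)⟩ (⟨p, hp.1⟩ : K)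

theorem IsProj.sub_mem_polar (K : PointedCone ℝ H) {x p : H} (hp : IsProj K x p) :
    x - p ∈ polar K := fun y hy => by
  simpa using hp.inner_sub_le_zero K.convex (p + y) (K.add_mem hp.1 hy)

theorem IsProj.inner_sub_self_eq_zero (K : PointedCone ℝ H) {x p : H} (hp : IsProj K x p) :
    ⟪x - p, p⟫_ℝ = 0 := by
  have h₀ := hp.inner_sub_le_zero K.convex 0 K.zero_mem
  rw [zero_sub, inner_neg_right] at h₀
  exact le_antisymm (hp.sub_mem_polar K p hp.1) (by linarith)

theorem norm_le_of_sq_norm_le_inner {g p : H} (h : ‖p‖ ^ 2 ≤ ⟪g, p⟫_ℝ) : ‖p‖ ≤ ‖g‖ := by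
  have := h.trans (real_inner_le_norm g p)
  rcases (norm_nonneg p).eq_or_lt with hp | hp
  · exact hp ▸ norm_nonneg g
  · nlinarith

theorem eq_of_sq_norm_le_inner {g p : H} (h : ‖p‖ ^ 2 ≤ ⟪g, p⟫_ℝ) (hgp : ‖g‖ = ‖p‖) : g = p := by
  rw [← sub_eq_zero, ← norm_eq_zero, ← sq_eq_zero_iff (M₀ := ℝ)]
  refine le_antisymm ?_ (sq_nonneg _)
  rw [norm_sub_sq_real, hgp]
  linarith

end ConeProjection

instance : SFinite muPos := inferInstanceAs (SFinite (volume.restrict _))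

lemma ae_muPos_pos : ∀ᵐ x ∂muPos, 0 < x := ae_restrict_mem measurableSet_Ioi

lemma muPos_restrict_Ioc (t : ℝ) : muPos.restrict (Ioc 0 t) = volume.restrict (Ioc 0 t) := by
  rw [muPos, Measure.restrict_restrict measurableSet_Ioc, inter_eq_left.2 Ioc_subset_Ioi_self]

lemma muPos_Ioc_ne_top (t : ℝ) : muPos (Ioc 0 t) ≠ ∞ :=
  ((Measure.restrict_apply_le _ _).trans_lt measure_Ioc_lt_top).ne

lemma muPos_Ioi (a : ℝ) : muPos (Ioi a) = ∞ := by
  rw [muPos, Measure.restrict_apply measurableSet_Ioi, Ioi_inter_Ioi, Real.volume_Ioi]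

lemma primitive_eq_setIntegral (f : E) (t : ℝ) :
    primitive f t = ∫ s in Ioc 0 t, f s ∂muPos := by
  rw [primitive, muPos_restrict_Ioc]

lemma primitive_sub (f g : E) (t : ℝ) : primitive (f - g) t = primitive f t - primitive g t := by
  have hint (f : E) : IntegrableOn f (Ioc 0 t) muPos :=
    integrableOn_Lp_of_measure_ne_top f (by norm_num) (muPos_Ioc_ne_top t)
  simp only [primitive_eq_setIntegral, ← integral_sub (hint f) (hint g)]
  exact integral_congr_ae (Lp.coeFn_sub f g).restrict

def indicatorIoc (t : ℝ) : E := indicatorConstLp 2 measurableSet_Ioc (muPos_Ioc_ne_top t) (1 : ℝ)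

lemma inner_indicatorIoc (t : ℝ) (f : E) : ⟪indicatorIoc t, f⟫_ℝ = primitive f t := by
  rw [indicatorIoc, L2.inner_indicatorConstLp_eq_setIntegral_inner, primitive_eq_setIntegral]
  simp

def V1Cone : PointedCone ℝ E where
  carrier := V1
  zero_mem' := ⟨0, antitoneOn_const, Lp.coeFn_zero _ _ _⟩
  add_mem' := by
    rintro f g ⟨ψ, hψ, hf⟩ ⟨χ, hχ, hg⟩
    refine ⟨ψ + χ, hψ.add hχ, ?_⟩
    filter_upwards [Lp.coeFn_add f g, hf, hg] with x h₁ h₂ h₃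
    simp only [h₁, Pi.add_apply, h₂, h₃]
  smul_mem' := by
    rintro ⟨c, hc⟩ f ⟨ψ, hψ, hf⟩
    refine ⟨c • ψ, fun a ha b hb hab => mul_le_mul_of_nonneg_left (hψ ha hb hab) hc, ?_⟩
    filter_upwards [Lp.coeFn_smul c f, hf] with x h₁ h₂
    simp [Nonneg.mk_smul, h₁, h₂]

lemma indicatorIoc_mem_V1 (t : ℝ) : indicatorIoc t ∈ V1 := by
  refine ⟨(Iic t).indicator 1, fun a _ b _ hab => ?_, ?_⟩
  · exact indicator_apply_le' (fun hb => (indicator_of_mem (show a ∈ Iic t from hab.trans hb) 1).ge)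
      fun _ => indicator_nonneg (fun _ _ => zero_le_one) a
  · refine indicatorConstLp_coeFn.trans ?_
    filter_upwards [ae_muPos_pos] with x hpos
    simp [indicator, hpos]

lemma exists_antitone_ae_eq_of_mem_V1 {p : E} (hp : p ∈ V1) :
    ∃ ψ : ℝ → ℝ, Antitone ψ ∧ (⇑p) =ᵐ[muPos] ψ := by
  obtain ⟨ψ, hψ, hpψ⟩ := hp
  refine ⟨fun x => ψ (max x 0), fun a b hab =>
    hψ (le_max_right a 0) (le_max_right b 0) (max_le_max_right 0 hab), ?_⟩
  filter_upwards [hpψ, ae_muPos_pos] with x hx hpos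
  rw [hx, max_eq_left hpos.le]

lemma exists_ge_abs_lt_of_ae_eq {f : E} {ψ : ℝ → ℝ} (hfψ : (⇑f) =ᵐ[muPos] ψ) {c : ℝ} (hc : 0 < c)
    (a : ℝ) : ∃ s, a ≤ s ∧ |ψ s| < c := by
  by_contra! h
  have hfin := (Lp.memLp f).meas_ge_lt_top'_enorm (by norm_num) (by norm_num)
    (ε := ENNReal.ofReal c) (by simpa using hc) (by simp)
  refine hfin.ne (top_le_iff.1 ((muPos_Ioi a).symm.trans_le (measure_mono_ae ?_)))
  filter_upwards [hfψ] with x hx (hxa : a < x)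
  show ENNReal.ofReal c ≤ ‖f x‖ₑ
  rw [Real.enorm_eq_ofReal_abs, hx]
  exact ENNReal.ofReal_le_ofReal (h x hxa.le)

lemma nonneg_of_antitone_ae_eq {f : E} {ψ : ℝ → ℝ} (hψ : Antitone ψ) (hfψ : (⇑f) =ᵐ[muPos] ψ)
    (x : ℝ) : 0 ≤ ψ x := by
  by_contra! hx
  obtain ⟨s, hxs, hs⟩ := exists_ge_abs_lt_of_ae_eq hfψ (neg_pos.2 hx) x
  have := hψ hxs
  rw [abs_lt] at hs
  linarith

lemma bddAbove_lt_of_antitone_ae_eq {f : E} {ψ : ℝ → ℝ} (hψ : Antitone ψ)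
    (hfψ : (⇑f) =ᵐ[muPos] ψ) {c : ℝ} (hc : 0 < c) : BddAbove {x | c < ψ x} := by
  obtain ⟨s, -, hs⟩ := exists_ge_abs_lt_of_ae_eq hfψ hc 0
  refine ⟨s, fun x (hx : c < ψ x) => le_of_not_gt fun hsx => ?_⟩
  linarith [hψ hsx.le, le_abs_self (ψ s)]

lemma exists_inter_Ioi_ae_eq_Ioc {S : Set ℝ} (hS : IsLowerSet S) (hb : BddAbove S) :
    ∃ r, 0 ≤ r ∧ (S ∩ Ioi 0 : Set ℝ) =ᵐ[volume] (Ioc 0 r : Set ℝ) := by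
  set T := S ∩ Ioi 0
  have hbT : BddAbove T := hb.mono inter_subset_left
  refine ⟨sSup T, Real.sSup_nonneg fun x hx => hx.2.le, ?_⟩
  have hsub : T ⊆ Ioc 0 (sSup T) := fun x hx => ⟨hx.2, le_csSup hbT hx⟩
  have hsup : Ioo 0 (sSup T) ⊆ T := by
    intro x hx
    have hne : T.Nonempty := nonempty_iff_ne_empty.2 fun h => by simp [h] at hx
    obtain ⟨y, hy, hxy⟩ := exists_lt_of_lt_csSup hne hx.2
    exact ⟨hS hxy.le hy.1, hx.1⟩
  exact hsub.eventuallyLE.antisymm (Ioo_ae_eq_Ioc.symm.le.trans hsup.eventuallyLE)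

section Subgraph

variable {ψ : ℝ → ℝ}

lemma indicator_regionBetween_apply (w : ℝ → ℝ) (x c : ℝ) :
    (regionBetween 0 ψ univ).indicator (fun q => w q.1) (x, c) =
      (Ioo 0 (ψ x)).indicator (fun _ => w x) c := by
  simp [indicator, regionBetween]

lemma integral_indicator_regionBetween (hψ₀ : ∀ x, 0 ≤ ψ x) (w : ℝ → ℝ) (x : ℝ) :
    ∫ c, (regionBetween 0 ψ univ).indicator (fun q => w q.1) (x, c) = ψ x * w x := by
  simp_rw [indicator_regionBetween_apply]
  rw [integral_indicator_const _ measurableSet_Ioo, Real.volume_real_Ioo_of_le (hψ₀ x),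
    sub_zero, smul_eq_mul]

lemma integrable_indicator_regionBetween {μ : Measure ℝ} [SFinite μ] (hψ : Measurable ψ)
    (hψ₀ : ∀ x, 0 ≤ ψ x) {w : ℝ → ℝ} (hw : AEStronglyMeasurable w μ)
    (hψw : Integrable (fun x => ψ x * w x) μ) :
    Integrable ((regionBetween 0 ψ univ).indicator fun q => w q.1) (μ.prod volume) := by
  have hA := measurableSet_regionBetween measurable_zero hψ MeasurableSet.univ
  refine (integrable_prod_iff (hw.comp_fst.indicator hA)).2 ⟨.of_forall fun x => ?_, ?_⟩
  · simp_rw [indicator_regionBetween_apply]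
    exact (integrable_indicator_iff measurableSet_Ioo).2 (integrableOn_const measure_Ioo_lt_top.ne)
  · simp_rw [norm_indicator_eq_indicator_norm,
      integral_indicator_regionBetween hψ₀ fun y => ‖w y‖]
    refine hψw.norm.congr (.of_forall fun x => ?_)
    simp [abs_of_nonneg (hψ₀ x)]

end Subgraph

lemma setIntegral_nonneg_of_isLowerSet {u : E} (hu : ∀ t, 0 ≤ t → 0 ≤ primitive u t)
    {S : Set ℝ} (hSm : MeasurableSet S) (hS : IsLowerSet S) (hb : BddAbove S) :
    0 ≤ ∫ x in S, u x ∂muPos := by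
  obtain ⟨r, hr, hSr⟩ := exists_inter_Ioi_ae_eq_Ioc hS hb
  have hrestr : muPos.restrict S = volume.restrict (S ∩ Ioi 0) := Measure.restrict_restrict hSm
  rw [hrestr, setIntegral_congr_set hSr]
  exact hu r hr

/-- Layer cake: a non-negative, non-increasing `p` is the superposition `∫₀^∞ 1_{p > c} dc` of
indicators of (a.e.) intervals `(0, r_c]`, against which `u` integrates non-negatively. -/
lemma inner_nonneg_of_primitive_nonneg {u p : E} (hp : p ∈ V1)
    (hu : ∀ t, 0 ≤ t → 0 ≤ primitive u t) : 0 ≤ ⟪u, p⟫_ℝ := by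
  obtain ⟨ψ, hψ, hpψ⟩ := exists_antitone_ae_eq_of_mem_V1 hp
  have hψ₀ := nonneg_of_antitone_ae_eq hψ hpψ
  set G := (regionBetween 0 ψ univ).indicator fun q => u q.1
  have hinner : ∀ᵐ x ∂muPos, ⟪u x, p x⟫_ℝ = ψ x * u x := by
    filter_upwards [hpψ] with x hx
    rw [Real.inner_apply, hx, mul_comm]
  have hG : Integrable G (muPos.prod volume) :=
    integrable_indicator_regionBetween hψ.measurable hψ₀ (Lp.aestronglyMeasurable u)
      ((L2.integrable_inner u p).congr hinner)
  have hslice (c : ℝ) : 0 ≤ ∫ x, G (x, c) ∂muPos := by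
    simp_rw [G, indicator_regionBetween_apply]
    rcases le_or_gt c 0 with hc | hc
    · simp [indicator, hc.not_gt]
    · have hSm : MeasurableSet {x | c < ψ x} := hψ.measurable measurableSet_Ioi
      have hS : (fun x => (Ioo 0 (ψ x)).indicator (fun _ => u x) c) =
          {x | c < ψ x}.indicator u := by
        ext x
        simp [indicator, hc]
      rw [hS, integral_indicator hSm]
      exact setIntegral_nonneg_of_isLowerSet hu hSm (fun _ _ hxy hy => hy.trans_le (hψ hxy))
        (bddAbove_lt_of_antitone_ae_eq hψ hpψ hc)
  calc 0 ≤ ∫ c, ∫ x, G (x, c) ∂muPos := integral_nonneg hslice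
    _ = ∫ x, ∫ c, G (x, c) ∂volume ∂muPos := by
      rw [← integral_prod_symm G hG, integral_prod G hG]
    _ = ⟪u, p⟫_ℝ := by
      rw [L2.inner_def]
      refine integral_congr_ae ?_
      filter_upwards [hinner] with x hx
      rw [hx, integral_indicator_regionBetween hψ₀]

/-- `h̲ = Pr_{V₁} h` is the unique solution of
`min{‖g‖ : g ∈ ℍ₁, g ≥ h on [0,∞)}`: it majorizes `h`, it has minimal norm among
all majorants in `ℍ₁`, and any majorant of the same norm coincides with it. -/
theorem proj_V1_solves_minimization (φ p : E) (hp : IsProj V1 φ p) :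
    (∀ t : ℝ, 0 ≤ t → primitive φ t ≤ primitive p t) ∧
    (∀ g : E, (∀ t : ℝ, 0 ≤ t → primitive φ t ≤ primitive g t) → ‖p‖ ≤ ‖g‖) ∧
    (∀ g : E, (∀ t : ℝ, 0 ≤ t → primitive φ t ≤ primitive g t) → ‖g‖ = ‖p‖ → g = p) := by
  have hpolar : φ - p ∈ polar V1 := hp.sub_mem_polar V1Cone
  have horth : ⟪φ - p, p⟫_ℝ = 0 := hp.inner_sub_self_eq_zero V1Cone
  have hmajor (t : ℝ) (_ : 0 ≤ t) : primitive φ t ≤ primitive p t := by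
    have := hpolar _ (indicatorIoc_mem_V1 t)
    rw [real_inner_comm, inner_indicatorIoc, primitive_sub] at this
    linarith
  have hhalf (g : E) (hg : ∀ t : ℝ, 0 ≤ t → primitive φ t ≤ primitive g t) :
      ‖p‖ ^ 2 ≤ ⟪g, p⟫_ℝ := by
    have hgφ := inner_nonneg_of_primitive_nonneg (u := g - φ) hp.1 fun t ht => by
      rw [primitive_sub]; linarith [hg t ht]
    rw [inner_sub_left] at hgφ horth
    rw [← real_inner_self_eq_norm_sq]
    linarith
  exact ⟨hmajor, fun g hg => norm_le_of_sq_norm_le_inner (hhalf g hg),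
    fun g hg => eq_of_sq_norm_le_inner (hhalf g hg)⟩
end
end
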